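/- arXiv:1609.03588 — 3 statements merged into one kernel-verified Lean document; each statement's English description precedes it below -/
import Mathlib

section
/- Dedekind's reciprocity law: for coprime positive integers d and c, s(d,c) + s(c,d) = (1/12)(d/c + 1/(dc) + c/d) - 1/4. -/
open Classical

open Finset in
/-- The sawtooth function: `((x)) = x - ⌊x⌋ - 1/2` if `x ∉ ℤ`, and `0` if `x ∈ ℤ`. -/
noncomputable def saw (x : ℝ) : ℝ :=
  if ∃ n : ℤ, x = (n : ℝ) then 0 else x - ⌊x⌋ - 1/2

/-- The Dedekind sum `s(d,c) = ∑_{k=1}^{c-1} ((k/c))((kd/c))`. -/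
noncomputable def dedekindSum (d c : ℤ) : ℝ :=
  ∑ k ∈ Finset.Icc (1 : ℤ) (c - 1), saw ((k : ℝ) / (c : ℝ)) * saw (((k * d : ℤ) : ℝ) / (c : ℝ))

/-! For `c ∤ k` one has `((k/c)) = (k mod c)/c - 1/2`, and `k ↦ kd mod c` permutes `{1, …, c-1}`;
hence `12 c s(d,c)` is an explicit polynomial in `c, d` minus `12 T(d,c)`, where
`T(d,c) = ∑_{0<k<c} k ⌊kd/c⌋`. Summing `k` over the lattice points `0 < k < c`, `0 < m < d` with
`mc < kd` once by rows and once by columns expresses `T(d,c)` through the column heights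
`⌊mc/d⌋`, whose sums and sums of squares are recovered from the permutation `m ↦ mc mod d`.
This yields the symmetric identity `12 (d T(d,c) + c T(c,d)) = (c-1)(d-1)(8cd - c - d - 1)`,
and the reciprocity law is the resulting linear combination. -/

open Finset

lemma two_mul_sum_Ioc_id {a b : ℤ} (hab : a ≤ b) :
    2 * ∑ k ∈ Ioc a b, k = b * (b + 1) - a * (a + 1) := by
  induction b, hab using Int.leInduction with
  | base => simp
  | succ b hab ih =>
    rw [← insert_Ioc_right_eq_Ioc_add_one hab, sum_insert (by simp), mul_add, ih]
    ring

lemma six_mul_sum_Ioc_sq {a b : ℤ} (hab : a ≤ b) :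
    6 * ∑ k ∈ Ioc a b, k ^ 2 = b * (b + 1) * (2 * b + 1) - a * (a + 1) * (2 * a + 1) := by
  induction b, hab using Int.leInduction with
  | base => simp
  | succ b hab ih =>
    rw [← insert_Ioc_right_eq_Ioc_add_one hab, sum_insert (by simp), mul_add, ih]
    ring

lemma Int.Icc_one_eq_Ioc_zero (n : ℤ) : Icc 1 n = Ioc 0 n := by
  simpa using Icc_add_one_left_eq_Ioc (0 : ℤ) n

section

variable {c d : ℤ}

lemma mul_emod_mem_Icc (hcop : IsCoprime d c) {k : ℤ} (hk : k ∈ Icc 1 (c - 1)) :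
    k * d % c ∈ Icc 1 (c - 1) := by
  rw [mem_Icc] at hk ⊢
  have hc : 0 < c := by omega
  have hne : k * d % c ≠ 0 := fun h => by
    have := Int.le_of_dvd (by omega) (hcop.symm.dvd_of_dvd_mul_right (Int.dvd_of_emod_eq_zero h))
    omega
  have := Int.emod_nonneg (k * d) hc.ne'
  have := Int.emod_lt_of_pos (k * d) hc
  omega

lemma mul_emod_mul_emod_eq_self {u x : ℤ} (hdu : d * u ≡ 1 [ZMOD c]) (hx₀ : 0 ≤ x)
    (hxc : x < c) : x * d % c * u % c = x := by
  have h : x * d % c * u ≡ x [ZMOD c] := calc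
    x * d % c * u ≡ x * d * u [ZMOD c] := (Int.mod_modEq _ _).mul_right _
    _ = x * (d * u) := by ring
    _ ≡ x * 1 [ZMOD c] := hdu.mul_left _
    _ = x := mul_one x
  rw [h, Int.emod_eq_of_lt hx₀ hxc]

lemma sum_Icc_comp_mul_emod {M : Type*} [AddCommMonoid M] (hcop : IsCoprime d c) (f : ℤ → M) :
    ∑ k ∈ Icc 1 (c - 1), f (k * d % c) = ∑ k ∈ Icc 1 (c - 1), f k := by
  obtain ⟨u, v, huv⟩ := hcop
  have hdu : d * u ≡ 1 [ZMOD c] := Int.modEq_iff_dvd.mpr ⟨v, by linear_combination -huv⟩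
  have hud : u * d ≡ 1 [ZMOD c] := by rwa [mul_comm]
  refine sum_nbij' (· * d % c) (· * u % c) (fun k hk => mul_emod_mem_Icc ⟨u, v, huv⟩ hk)
    (fun k hk => mul_emod_mem_Icc ⟨d, v, by linear_combination huv⟩ hk) (fun k hk => ?_)
    (fun k hk => ?_) fun _ _ => rfl
  · rw [mem_Icc] at hk
    exact mul_emod_mul_emod_eq_self hdu (by omega) (by omega)
  · rw [mem_Icc] at hk
    exact mul_emod_mul_emod_eq_self hud (by omega) (by omega)

lemma saw_intCast_div {k : ℤ} (hc : 0 < c) (hk : ¬ c ∣ k) :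
    saw (k / c) = ((k % c : ℤ) : ℝ) / c - 1 / 2 := by
  lift c to ℕ using hc.le
  have hni : ¬ ∃ n : ℤ, (k : ℝ) / (c : ℤ) = n := by
    rintro ⟨n, hn⟩
    rw [div_eq_iff (by exact_mod_cast hc.ne'), ← Int.cast_mul, Int.cast_inj] at hn
    exact hk ⟨n, by rw [hn, mul_comm]⟩
  rw [saw, if_neg hni, Int.self_sub_floor, Int.cast_natCast,
    Int.fract_div_intCast_eq_div_intCast_mod]

lemma four_mul_sq_mul_dedekindSum (hcop : IsCoprime d c) :
    4 * (c : ℝ) ^ 2 * dedekindSum d c =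
      ((∑ k ∈ Icc 1 (c - 1), (2 * k - c) * (2 * (k * d % c) - c) : ℤ) : ℝ) := by
  rw [dedekindSum, mul_sum, Int.cast_sum]
  refine sum_congr rfl fun k hk => ?_
  rw [mem_Icc] at hk
  have hc : 0 < c := by omega
  have hck : ¬ c ∣ k := fun h => by have := Int.le_of_dvd (by omega) h; omega
  have hckd : ¬ c ∣ k * d := fun h => hck (hcop.symm.dvd_of_dvd_mul_right h)
  have hc' : (c : ℝ) ≠ 0 := by exact_mod_cast hc.ne'
  rw [saw_intCast_div hc hck, saw_intCast_div hc hckd, Int.emod_eq_of_lt (by omega) (by omega)]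
  push_cast
  field_simp
  ring

noncomputable def weightedFloorSum (d c : ℤ) : ℤ :=
  ∑ k ∈ Icc 1 (c - 1), k * (k * d / c)

lemma three_mul_sum_mul_emod_eq_weightedFloorSum (hc : 0 < c) (hcop : IsCoprime d c) :
    3 * ∑ k ∈ Icc 1 (c - 1), (2 * k - c) * (2 * (k * d % c) - c) =
      c * (2 * d * (c - 1) * (2 * c - 1) - 12 * weightedFloorSum d c - 3 * c * (c - 1)) := by
  have hperm := sum_Icc_comp_mul_emod hcop id
  have hS₁ := two_mul_sum_Ioc_id (by omega : 0 ≤ c - 1)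
  have hS₂ := six_mul_sum_Ioc_sq (by omega : 0 ≤ c - 1)
  have hcard : (#(Icc 1 (c - 1)) : ℤ) = c - 1 := by rw [Int.card_Icc]; omega
  rw [← Int.Icc_one_eq_Ioc_zero] at hS₁ hS₂
  have hterm : ∀ k ∈ Icc 1 (c - 1), (2 * k - c) * (2 * (k * d % c) - c) =
      4 * d * k ^ 2 - 4 * c * (k * (k * d / c)) - 2 * c * (k + k * d % c) + c ^ 2 :=
    fun k _ => by rw [Int.emod_def]; ring
  rw [sum_congr rfl hterm, weightedFloorSum]
  simp only [sum_add_distrib, sum_sub_distrib, ← mul_sum, sum_const, nsmul_eq_mul, hcard]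
  simp only [id] at hperm
  linear_combination 2 * d * hS₂ - 6 * c * hS₁ - 6 * c * hperm

lemma twelve_mul_dedekindSum (hc : 0 < c) (hcop : IsCoprime d c) :
    12 * c * dedekindSum d c =
      2 * d * (c - 1) * (2 * c - 1) - 12 * (weightedFloorSum d c : ℝ) - 3 * c * (c - 1) := by
  have h := congrArg (Int.cast : ℤ → ℝ) (three_mul_sum_mul_emod_eq_weightedFloorSum hc hcop)
  rw [Int.cast_mul, ← four_mul_sq_mul_dedekindSum hcop] at h
  push_cast at h
  have hc' : (c : ℝ) ≠ 0 := by exact_mod_cast hc.ne'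
  apply mul_left_cancel₀ hc'
  linear_combination h

lemma filter_Icc_mul_lt_mul_eq_Icc (hd : 0 < d) (hcop : IsCoprime d c) {k : ℤ}
    (hk : k ∈ Icc 1 (c - 1)) : {m ∈ Icc 1 (d - 1) | m * c < k * d} = Icc 1 (k * d / c) := by
  rw [mem_Icc] at hk
  have hc : 0 < c := by omega
  have hkd : k * d / c < d := (Int.ediv_lt_iff_lt_mul hc).mpr (by nlinarith)
  ext m
  simp only [mem_filter, mem_Icc, Int.le_ediv_iff_mul_le hc]
  refine ⟨fun ⟨⟨hm, _⟩, hlt⟩ => ⟨hm, hlt.le⟩, fun ⟨hm, hle⟩ => ⟨⟨hm, ?_⟩, ?_⟩⟩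
  · have := (Int.le_ediv_iff_mul_le hc).mpr hle
    omega
  · refine lt_of_le_of_ne hle fun heq => ?_
    have hck : c ∣ k := hcop.symm.dvd_of_dvd_mul_right ⟨m, by linear_combination -heq⟩
    have := Int.le_of_dvd (by omega) hck
    omega

lemma filter_Icc_lt_mul_eq_Ioc (hd : 0 < d) {m : ℤ} (hmc : 0 ≤ m * c) :
    {k ∈ Icc 1 (c - 1) | m * c < k * d} = Ioc (m * c / d) (c - 1) := by
  have := Int.ediv_nonneg hmc hd.le
  ext k
  simp only [mem_filter, mem_Icc, mem_Ioc, ← Int.ediv_lt_iff_lt_mul hd]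
  omega

lemma two_mul_weightedFloorSum_add_sum_ediv (hd : 0 < d) (hc : 0 < c) (hcop : IsCoprime d c) :
    2 * weightedFloorSum d c + ∑ m ∈ Icc 1 (d - 1), ((m * c / d) ^ 2 + m * c / d) =
      c * (c - 1) * (d - 1) := by
  have hrow : ∀ k ∈ Icc 1 (c - 1),
      k * (k * d / c) = ∑ m ∈ Icc 1 (d - 1), if m * c < k * d then k else 0 := by
    intro k hk
    have : 0 ≤ k * d / c := Int.ediv_nonneg (by nlinarith [mem_Icc.mp hk]) hc.le
    rw [← sum_filter, filter_Icc_mul_lt_mul_eq_Icc hd hcop hk, sum_const, Int.card_Icc,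
      nsmul_eq_mul, add_sub_cancel_right, Int.toNat_of_nonneg this, mul_comm]
  have hcol : ∀ m ∈ Icc 1 (d - 1),
      2 * (∑ k ∈ Icc 1 (c - 1), if m * c < k * d then k else 0) +
        ((m * c / d) ^ 2 + m * c / d) = c * (c - 1) := by
    intro m hm
    have hmc : 0 ≤ m * c := by nlinarith [mem_Icc.mp hm]
    have : m * c / d ≤ c - 1 := by
      have := (Int.ediv_lt_iff_lt_mul hd).mpr (by nlinarith [mem_Icc.mp hm] : m * c < c * d)
      omega
    rw [← sum_filter, filter_Icc_lt_mul_eq_Ioc hd hmc, two_mul_sum_Ioc_id this]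
    ring
  calc 2 * weightedFloorSum d c + ∑ m ∈ Icc 1 (d - 1), ((m * c / d) ^ 2 + m * c / d)
      = ∑ m ∈ Icc 1 (d - 1), (2 * (∑ k ∈ Icc 1 (c - 1), if m * c < k * d then k else 0) +
          ((m * c / d) ^ 2 + m * c / d)) := by
        rw [weightedFloorSum, sum_congr rfl hrow, sum_comm, mul_sum, ← sum_add_distrib]
    _ = ∑ m ∈ Icc 1 (d - 1), c * (c - 1) := sum_congr rfl hcol
    _ = c * (c - 1) * (d - 1) := by
        rw [sum_const, Int.card_Icc, nsmul_eq_mul, Int.toNat_of_nonneg (by omega)]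
        ring

lemma two_mul_sum_ediv (hd : 0 < d) (hcop : IsCoprime c d) :
    2 * ∑ m ∈ Icc 1 (d - 1), m * c / d = (c - 1) * (d - 1) := by
  have hperm := sum_Icc_comp_mul_emod hcop id
  have hS₁ := two_mul_sum_Ioc_id (by omega : 0 ≤ d - 1)
  rw [← Int.Icc_one_eq_Ioc_zero] at hS₁
  simp only [id, Int.emod_def, sum_sub_distrib, ← mul_sum, ← sum_mul] at hperm
  apply mul_left_cancel₀ hd.ne'
  linear_combination (c - 1) * hS₁ - 2 * hperm

lemma six_mul_sum_ediv_sq (hd : 0 < d) (hcop : IsCoprime c d) :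
    6 * d * ∑ m ∈ Icc 1 (d - 1), (m * c / d) ^ 2 =
      12 * c * weightedFloorSum c d - (c ^ 2 - 1) * (d - 1) * (2 * d - 1) := by
  have hperm := sum_Icc_comp_mul_emod hcop (· ^ 2)
  have hS₂ := six_mul_sum_Ioc_sq (by omega : 0 ≤ d - 1)
  rw [← Int.Icc_one_eq_Ioc_zero] at hS₂
  have hterm : ∀ m ∈ Icc 1 (d - 1),
      (m * c % d) ^ 2 = c ^ 2 * m ^ 2 - 2 * c * d * (m * (m * c / d)) + d ^ 2 * (m * c / d) ^ 2 :=
    fun m _ => by rw [Int.emod_def]; ring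
  rw [sum_congr rfl hterm, sum_add_distrib, sum_sub_distrib, ← mul_sum, ← mul_sum,
    ← mul_sum] at hperm
  apply mul_left_cancel₀ hd.ne'
  rw [weightedFloorSum]
  linear_combination 6 * hperm - (c ^ 2 - 1) * hS₂

lemma weightedFloorSum_reciprocity (hd : 0 < d) (hc : 0 < c) (hcop : IsCoprime d c) :
    12 * (d * weightedFloorSum d c + c * weightedFloorSum c d) =
      (c - 1) * (d - 1) * (8 * c * d - c - d - 1) := by
  have hcount := two_mul_weightedFloorSum_add_sum_ediv hd hc hcop
  have hsq := six_mul_sum_ediv_sq hd hcop.symm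
  have hlin := two_mul_sum_ediv hd hcop.symm
  rw [sum_add_distrib] at hcount
  linear_combination 6 * d * hcount - hsq - 3 * d * hlin

end

/-- Dedekind's reciprocity law. -/
theorem dedekindSum_reciprocity (d c : ℤ) (hd : 0 < d) (hc : 0 < c) (hcop : IsCoprime d c) :
    dedekindSum d c + dedekindSum c d =
      (1 / 12) * ((d : ℝ) / c + 1 / (d * c) + (c : ℝ) / d) - 1 / 4 := by
  have hsdc := twelve_mul_dedekindSum hc hcop
  have hscd := twelve_mul_dedekindSum hd hcop.symm
  have hT : (12 * (d * weightedFloorSum d c + c * weightedFloorSum c d) : ℝ) =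
      (c - 1) * (d - 1) * (8 * c * d - c - d - 1) := by
    exact_mod_cast weightedFloorSum_reciprocity hd hc hcop
  have hsum : 12 * c * d * (dedekindSum d c + dedekindSum c d) =
      (d : ℝ) ^ 2 + c ^ 2 + 1 - 3 * c * d := by
    linear_combination d * hsdc + c * hscd - hT
  have hc' : (c : ℝ) ≠ 0 := by exact_mod_cast hc.ne'
  have hd' : (d : ℝ) ≠ 0 := by exact_mod_cast hd.ne'
  field_simp
  linear_combination 4 * hsum
end

section
/- For any complex number cz + d with z ∈ ℍ and (c,d) ≠ (0,0) real with c ≠ 0 or d ≠ 0, one has Log(cz+d) = Log((cz+d)/(i·sign(c(−d)))) + i(π/2)·sign(c(−d)), where c(−d) = c if c ≠ 0 and −d if c = 0. -/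
open Complex UpperHalfPlane

/-- `Log(cz+d) = Log((cz+d)/(i·sign(c(−d)))) + i(π/2)·sign(c(−d))`, where
`c(−d) = c` if `c ≠ 0` and `−d` if `c = 0`. -/
theorem log_reparametrization (z : ℍ) (c d : ℝ) (h : ¬(c = 0 ∧ d = 0)) :
    Complex.log ((c : ℂ) * (z : ℂ) + (d : ℂ)) =
      Complex.log (((c : ℂ) * (z : ℂ) + (d : ℂ)) /
        (Complex.I * (Real.sign (if c ≠ 0 then c else -d) : ℝ)))
      + Complex.I * (Real.pi / 2) * (Real.sign (if c ≠ 0 then c else -d) : ℝ) := by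
  set s : ℝ := Real.sign (if c ≠ 0 then c else -d) with hs
  set w : ℂ := (c : ℂ) * (z : ℂ) + (d : ℂ) with hwdef
  have hzim : (0:ℝ) < z.im := z.2
  have him : w.im = c * z.im := by
    simp [hwdef, Complex.add_im, Complex.mul_im]
  have hre : w.re = c * z.re + d := by
    simp [hwdef, Complex.add_re, Complex.mul_re]
  have hw0 : w ≠ 0 := by
    intro h0
    by_cases hc : c = 0
    · have hd : d ≠ 0 := fun hd => h ⟨hc, hd⟩
      have : w.re = d := by simp [hre, hc]
      rw [h0] at this; simp at this; exact hd this.symm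
    · have : w.im = 0 := by rw [h0]; simp
      rw [him] at this
      rcases mul_eq_zero.mp this with h1 | h1
      · exact hc h1
      · exact hzim.ne' h1
  -- sign s is ±1
  have hs1 : s = 1 ∨ s = -1 := by
    by_cases hc : c = 0
    · have hd : d ≠ 0 := fun hd => h ⟨hc, hd⟩
      rw [hs, if_neg (by simpa using hc)]
      rcases hd.lt_or_gt with h1 | h1
      · exact Or.inl (Real.sign_of_pos (by linarith))
      · exact Or.inr (Real.sign_of_neg (by linarith))
    · rw [hs, if_pos hc]
      rcases (show c ≠ 0 from hc).lt_or_gt with h1 | h1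
      · exact Or.inr (Real.sign_of_neg h1)
      · exact Or.inl (Real.sign_of_pos h1)
  have hIs : (Complex.I * (s:ℂ)) ≠ 0 := by
    rcases hs1 with h1 | h1 <;> simp [h1]
  have hexp : Complex.exp (Complex.I * (Real.pi/2) * (s:ℂ)) = Complex.I * s := by
    rcases hs1 with h1 | h1
    · rw [h1]
      rw [show Complex.I * ((Real.pi:ℂ)/2) * ((1:ℝ):ℂ) = ((Real.pi/2 : ℝ):ℂ) * Complex.I by
        push_cast; ring, Complex.exp_mul_I, ← Complex.ofReal_cos, ← Complex.ofReal_sin,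
        Real.cos_pi_div_two, Real.sin_pi_div_two]
      push_cast; ring
    · rw [h1]
      rw [show Complex.I * ((Real.pi:ℂ)/2) * ((-1:ℝ):ℂ) = ((-(Real.pi/2) : ℝ):ℂ) * Complex.I by
        push_cast; ring, Complex.exp_mul_I, ← Complex.ofReal_cos, ← Complex.ofReal_sin,
        Real.cos_neg, Real.sin_neg, Real.cos_pi_div_two, Real.sin_pi_div_two]
      push_cast; ring
  set u : ℂ := w / (Complex.I * (s:ℂ)) with hu
  have hu0 : u ≠ 0 := div_ne_zero hw0 hIs
  have key : w = Complex.exp (Complex.log u + Complex.I * (Real.pi/2) * (s:ℂ)) := by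
    rw [Complex.exp_add, Complex.exp_log hu0, hexp, hu, div_mul_cancel₀ _ hIs]
  have him_x : (Complex.log u + Complex.I * (Real.pi/2) * (s:ℂ)).im
      = u.arg + Real.pi/2 * s := by
    simp [Complex.add_im, Complex.log_im, Complex.mul_im, Complex.mul_re]
  -- bounds on arg u in each case
  have harg : -Real.pi < u.arg + Real.pi/2 * s ∧ u.arg + Real.pi/2 * s ≤ Real.pi := by
    have hpi := Real.pi_pos
    by_cases hc : c = 0
    · have hd : d ≠ 0 := fun hd => h ⟨hc, hd⟩
      have hw_eq : w = (d : ℂ) := by rw [hwdef, hc]; push_cast; ring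
      rcases hd.lt_or_gt with h1 | h1
      · -- d < 0, s = 1, u = (-d) * I
        have hs' : s = 1 := by rw [hs, if_neg (by simpa using hc)]; exact Real.sign_of_pos (by linarith)
        have : u = ((-d : ℝ) : ℂ) * Complex.I := by
          rw [hu, hw_eq, hs']; push_cast
          rw [mul_one, Complex.div_I]; ring
        have harg : u.arg = Real.pi / 2 := by
          rw [this, Complex.arg_real_mul _ (by linarith : (0:ℝ) < -d), Complex.arg_I]
        rw [harg, hs']; constructor <;> linarith
      · -- d > 0, s = -1, u = d * I
        have hs' : s = -1 := by rw [hs, if_neg (by simpa using hc)]; exact Real.sign_of_neg (by linarith)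
        have : u = ((d : ℝ) : ℂ) * Complex.I := by
          rw [hu, hw_eq, hs']; push_cast
          rw [mul_neg_one, div_neg, Complex.div_I, neg_neg]
        have harg : u.arg = Real.pi / 2 := by
          rw [this, Complex.arg_real_mul _ h1, Complex.arg_I]
        rw [harg, hs']; constructor <;> linarith
    · rcases (show c ≠ 0 from hc).lt_or_gt with h1 | h1
      · -- c < 0, s = -1, u = w * I, re u = -im w > 0
        have hs' : s = -1 := by rw [hs, if_pos hc]; exact Real.sign_of_neg h1
        have hueq : u = w * Complex.I := by
          rw [hu, hs']; push_cast
          rw [mul_neg_one, div_neg, Complex.div_I, neg_neg]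
        have hreu : 0 < u.re := by
          have h2 : u.re = -(c * z.im) := by rw [hueq]; simp [Complex.mul_re, him]
          rw [h2]; nlinarith
        have := Complex.abs_arg_lt_pi_div_two_iff.mpr (Or.inl hreu)
        rw [abs_lt] at this
        rw [hs']; constructor <;> [linarith [this.1]; linarith [this.2]]
      · -- c > 0, s = 1, u = w / I = -(w*I), re u = im w > 0
        have hs' : s = 1 := by rw [hs, if_pos hc]; exact Real.sign_of_pos h1
        have hueq : u = -(w * Complex.I) := by
          rw [hu, hs']; push_cast; rw [mul_one, Complex.div_I]
        have hreu : 0 < u.re := by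
          have h2 : u.re = c * z.im := by rw [hueq]; simp [Complex.mul_re, him]
          rw [h2]; nlinarith
        have := Complex.abs_arg_lt_pi_div_two_iff.mpr (Or.inl hreu)
        rw [abs_lt] at this
        rw [hs']; constructor <;> [linarith [this.1]; linarith [this.2]]
  calc Complex.log w
      = Complex.log (Complex.exp (Complex.log u + Complex.I * (Real.pi/2) * (s:ℂ))) := by
        rw [← key]
    _ = Complex.log u + Complex.I * (Real.pi/2) * (s:ℂ) := by
        apply Complex.log_exp <;> rw [him_x]
        · exact harg.1
        · exact harg.2
end

section
/- Matrix trace identity: if g, h ∈ SL₂(ℝ) have bottom rows (c_g, d_g), (c_h, d_h) with c_g, c_h, and c_{gh} all nonzero, and top-left entries a_g, a_h, a_{gh} with trace entries, then (a_g + d_g)/c_g + (a_h + d_h)/c_h − (a_{gh} + d_{gh})/c_{gh} = (c_g² + c_h² + c_{gh}²)/(c_g·c_h·c_{gh}). -/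
open Matrix

abbrev SL2R := Matrix.SpecialLinearGroup (Fin 2) ℝ

/-- The trace/lower-left entry identity for a product of two matrices in `SL₂(ℝ)`. -/
theorem trace_entry_identity (g h : SL2R)
    (hg : g.1 1 0 ≠ 0) (hh : h.1 1 0 ≠ 0) (hgh : (g * h).1 1 0 ≠ 0) :
    (g.1 0 0 + g.1 1 1) / g.1 1 0 + (h.1 0 0 + h.1 1 1) / h.1 1 0
      - ((g * h).1 0 0 + (g * h).1 1 1) / (g * h).1 1 0
    = (g.1 1 0 ^ 2 + h.1 1 0 ^ 2 + (g * h).1 1 0 ^ 2)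
        / (g.1 1 0 * h.1 1 0 * (g * h).1 1 0) := by
  have hdg := g.2
  have hdh := h.2
  rw [Matrix.det_fin_two] at hdg hdh
  simp only [Matrix.SpecialLinearGroup.coe_mul, Matrix.mul_apply, Fin.sum_univ_two] at hgh ⊢
  field_simp
  ring_nf
  nlinarith [hdg, hdh, sq_nonneg (g.1 1 0), mul_comm (g.1 0 0) (g.1 1 1)]
end
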